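/- Let n be a positive integer, let i be an integer with 1 ≤ i ≤ ⌈n/2⌉, let c > 4 be a real number, and let t be a positive integer with n²/c ≤ t ≤ n²/4. Then Pr_i^t[MIN(w) ≥ 1] ≥ e^{−1−c} · i/n, where e is Euler's number. -/

import Mathlib

/-!
A walk from `i ≥ 0` that ends in `(0, 2i]` either stays positive or visits `0`. Negating a walk
after its first visit to `0` and then mirroring it about `i` injects the walks of the second kind
that end positive into the walks ending above `2i`; hence at least as many walks stay positive as
end in `(0, 2i]` (the reflection principle).

A walk with `u` up-steps ends at `i + 2u - t`, so there are `C(t, u)` of them, and for `i ≤ t`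
exactly `i` values of `u` put the end in `(0, 2i]`. Stirling's bounds on factorials give
`2 ^ t * exp (-(2u - t)² / t) ≤ 2 √t * C(t, u)`, and `(2u - t)² ≤ i² ≤ n² ≤ c t`, `2 √t ≤ n` turn
this into `C(t, u) ≥ exp (-c) * 2 ^ t / n` for each of the `i` values.
-/

/-- A 1D walk of length `t` started at `i`: a function on `{0,…,t}` starting at `i`
whose consecutive values differ by exactly `1`. -/
def IsWalk (i : ℤ) (t : ℕ) (w : Fin (t + 1) → ℤ) : Prop :=
  w 0 = i ∧ ∀ j : Fin t, |w j.succ - w j.castSucc| = 1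

/-- The number of walks of length `t` started at `i` satisfying `P`. -/
noncomputable def walkCount (i : ℤ) (t : ℕ) (P : (Fin (t + 1) → ℤ) → Prop) : ℕ :=
  {w : Fin (t + 1) → ℤ | IsWalk i t w ∧ P w}.ncard

/-- `Pr_i^t[P]`: the number of walks of length `t` started at `i` satisfying `P`,
divided by `2 ^ t`. -/
noncomputable def walkProb (i : ℤ) (t : ℕ) (P : (Fin (t + 1) → ℤ) → Prop) : ℝ :=
  (walkCount i t P : ℝ) / 2 ^ t

/-- `w(t) = n`. -/
def endsAt {t : ℕ} (n : ℤ) (w : Fin (t + 1) → ℤ) : Prop := w (Fin.last t) = n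

/-- `MAX(w) = n`. -/
def maxEq {t : ℕ} (n : ℤ) (w : Fin (t + 1) → ℤ) : Prop :=
  (∀ j, w j ≤ n) ∧ ∃ j, w j = n

/-- `MIN(w) ≥ m`. -/
def minGE {t : ℕ} (m : ℤ) (w : Fin (t + 1) → ℤ) : Prop := ∀ j, m ≤ w j

open Real Finset
open scoped Nat

theorem Stirling.factorial_le_exp_one_mul_sqrt {m : ℕ} (hm : m ≠ 0) :
    (m ! : ℝ) ≤ exp 1 * √m * (m / exp 1) ^ m := by
  obtain ⟨k, rfl⟩ := Nat.exists_eq_succ_of_ne_zero hm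
  have h := Stirling.stirlingSeq'_antitone (Nat.zero_le k)
  simp only [Function.comp, Stirling.stirlingSeq_one] at h
  rw [Stirling.stirlingSeq, div_le_iff₀ (by positivity)] at h
  calc ((k + 1)! : ℝ)
      ≤ exp 1 / √2 * (√(2 * (k + 1 : ℕ)) * ((k + 1 : ℕ) / exp 1) ^ (k + 1)) := h
    _ = _ := by rw [Real.sqrt_mul (by norm_num)]; field_simp

theorem exp_one_sq_le_four_mul_sqrt_two_mul_pi : exp 1 ^ 2 ≤ 4 * √(2 * π) := by
  have he : exp 1 ≤ 2.72 := by linarith [Real.exp_one_lt_d9]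
  have hpi : (2.5 : ℝ) ≤ √(2 * π) :=
    Real.le_sqrt_of_sq_le (by linarith [Real.pi_gt_d2])
  nlinarith [Real.exp_pos 1]

/-- Writing `2u = t(1 + x)`, `2v = t(1 - x)` with `t = u + v`, this is `1 ± x ≤ exp (±x)`. -/
theorem two_pow_mul_pow_mul_pow_le (u v : ℕ) :
    (2 : ℝ) ^ (u + v) * u ^ u * v ^ v
      ≤ ((u : ℝ) + v) ^ (u + v) * exp ((u - v) ^ 2 / (u + v)) := by
  rcases Nat.eq_zero_or_pos (u + v) with h0 | hpos
  · obtain ⟨rfl, rfl⟩ : u = 0 ∧ v = 0 := by omega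
    simp
  have ht : (0 : ℝ) < u + v := by exact_mod_cast hpos
  set x : ℝ := (u - v) / (u + v)
  have hu : 2 * (u : ℝ) = (u + v) * (1 + x) := by simp only [x]; field_simp; ring
  have hv : 2 * (v : ℝ) = (u + v) * (1 + -x) := by simp only [x]; field_simp; ring
  have key : ∀ (m : ℕ) (y : ℝ), 2 * (m : ℝ) = (u + v) * (1 + y) →
      (2 * (m : ℝ)) ^ m ≤ ((u + v) * exp y) ^ m :=
    fun m y hm => pow_le_pow_left₀ (by positivity)
      (hm ▸ mul_le_mul_of_nonneg_left (by linarith [Real.add_one_le_exp y]) ht.le) m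
  calc (2 : ℝ) ^ (u + v) * u ^ u * v ^ v = (2 * (u : ℝ)) ^ u * (2 * (v : ℝ)) ^ v := by
        rw [mul_pow, mul_pow, pow_add]; ring
    _ ≤ ((u + v) * exp x) ^ u * ((u + v) * exp (-x)) ^ v :=
        mul_le_mul (key u x hu) (key v (-x) hv) (by positivity) (by positivity)
    _ = ((u : ℝ) + v) ^ (u + v) * exp (x * (u - v)) := by
        rw [mul_pow, mul_pow, ← Real.exp_nat_mul, ← Real.exp_nat_mul, pow_add,
          show x * (u - v) = u * x + v * -x by ring, Real.exp_add]
        ring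
    _ = ((u : ℝ) + v) ^ (u + v) * exp ((u - v) ^ 2 / (u + v)) := by
        simp only [x]; ring_nf

theorem two_pow_mul_exp_le_sqrt_mul_choose {u v : ℕ} (h : 0 < u + v) :
    (2 : ℝ) ^ (u + v) * exp (-((u : ℝ) - v) ^ 2 / (u + v))
      ≤ 2 * √((u : ℝ) + v) * (u + v).choose u := by
  have ht : (1 : ℝ) ≤ u + v := by exact_mod_cast h
  have hchoose : (1 : ℝ) ≤ (u + v).choose u := by
    exact_mod_cast Nat.choose_pos (Nat.le_add_right u v)
  rw [neg_div]
  by_cases hdeg : u = 0 ∨ v = 0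
  · have hD : ((u : ℝ) - v) ^ 2 / (u + v) = u + v := by
      rw [div_eq_iff (by positivity)]; rcases hdeg with rfl | rfl <;> simp <;> ring
    have h2 : (2 : ℝ) ^ (u + v) ≤ exp ((u : ℝ) + v) := by
      calc (2 : ℝ) ^ (u + v) ≤ exp 1 ^ (u + v) :=
            pow_le_pow_left₀ (by norm_num) (by linarith [Real.add_one_le_exp (1 : ℝ)]) _
        _ = exp ((u : ℝ) + v) := by rw [← Real.exp_nat_mul]; push_cast; ring_nf
    have hsqrt : 1 ≤ √((u : ℝ) + v) := Real.one_le_sqrt.mpr ht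
    calc (2 : ℝ) ^ (u + v) * exp (-(((u : ℝ) - v) ^ 2 / (u + v))) ≤ 1 := by
          rw [hD, Real.exp_neg, ← div_eq_mul_inv, div_le_one (Real.exp_pos _)]; exact h2
      _ ≤ 2 * √((u : ℝ) + v) * (u + v).choose u := by nlinarith
  obtain ⟨hu, hv⟩ : 0 < u ∧ 0 < v := by omega
  set D : ℝ := ((u : ℝ) - v) ^ 2 / (u + v)
  have hfact : ((u + v).choose u * u ! * v ! : ℝ) = (u + v)! := by
    rw [Nat.choose_symm_add]; exact_mod_cast Nat.add_choose_mul_factorial_mul_factorial u v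
  have hsqrt : √(u : ℝ) * √v ≤ (u + v) / 2 := by
    nlinarith [sq_nonneg (√(u : ℝ) - √v), Real.sq_sqrt (Nat.cast_nonneg (α := ℝ) u),
      Real.sq_sqrt (Nat.cast_nonneg (α := ℝ) v)]
  have hstirling : √(2 * π * (u + v)) * ((u + v) / exp 1) ^ (u + v) ≤ ((u + v)! : ℝ) := by
    exact_mod_cast Stirling.le_factorial_stirling (u + v)
  have hu! := Stirling.factorial_le_exp_one_mul_sqrt hu.ne'
  have hv! := Stirling.factorial_le_exp_one_mul_sqrt hv.ne'
  refine le_of_mul_le_mul_right (a := (u ! * v ! : ℝ)) ?_ (by positivity)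
  calc (2 : ℝ) ^ (u + v) * exp (-D) * (u ! * v !)
      ≤ 2 ^ (u + v) * exp (-D) *
          ((exp 1 * √u * (u / exp 1) ^ u) * (exp 1 * √v * (v / exp 1) ^ v)) := by
        gcongr
    _ = exp 1 ^ 2 * (√u * √v) * exp (-D) * (2 ^ (u + v) * u ^ u * v ^ v) /
          exp 1 ^ (u + v) := by
        rw [div_pow, div_pow, pow_add (exp 1)]; field_simp
    _ ≤ exp 1 ^ 2 * ((u + v) / 2) * exp (-D) * ((u + v) ^ (u + v) * exp D) /
          exp 1 ^ (u + v) := by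
        gcongr exp 1 ^ 2 * ?_ * exp (-D) * ?_ / _
        exact two_pow_mul_pow_mul_pow_le u v
    _ = exp 1 ^ 2 / 2 * (u + v) * ((u + v) / exp 1) ^ (u + v) := by
        rw [div_pow, Real.exp_neg]; field_simp
    _ ≤ 2 * √(2 * π) * (u + v) * ((u + v) / exp 1) ^ (u + v) := by
        gcongr; linarith [exp_one_sq_le_four_mul_sqrt_two_mul_pi]
    _ = 2 * √((u : ℝ) + v) * (√(2 * π * (u + v)) * ((u + v) / exp 1) ^ (u + v)) := by
        rw [Real.sqrt_mul (by positivity : (0 : ℝ) ≤ 2 * π) ((u : ℝ) + v)]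
        linear_combination (2 * √(2 * π) * ((u + v) / exp 1) ^ (u + v)) *
          (Real.mul_self_sqrt (by positivity : (0 : ℝ) ≤ u + v)).symm
    _ ≤ 2 * √((u : ℝ) + v) * (u + v)! := by gcongr
    _ = 2 * √((u : ℝ) + v) * (u + v).choose u * (u ! * v !) := by rw [← hfact]; ring

namespace IsWalk

variable {i : ℤ} {t : ℕ} {w : Fin (t + 1) → ℤ}

theorem succ_eq (hw : IsWalk i t w) (j : Fin t) :
    w j.succ = w j.castSucc + 1 ∨ w j.succ = w j.castSucc - 1 := by
  have := hw.2 j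
  rcases abs_eq (zero_le_one' ℤ) |>.mp this with h | h <;> omega

theorem pos_of_forall_ne_zero (hw : IsWalk i t w) (hi : 0 ≤ i) (hne : ∀ j, w j ≠ 0)
    (j : Fin (t + 1)) : 0 < w j := by
  induction j using Fin.induction with
  | zero => exact lt_of_le_of_ne (hw.1 ▸ hi) (hne 0).symm
  | succ j ih => have := hne j.succ; rcases hw.succ_eq j with h | h <;> omega

theorem const_sub (hw : IsWalk i t w) (a : ℤ) : IsWalk (a - i) t (fun j => a - w j) :=
  ⟨by simp [hw.1], fun j => by rw [← abs_neg]; convert hw.2 j using 2; ring⟩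

end IsWalk

/-- The condition `∃ k ≤ j, w k = 0` is unchanged by this operation, so it is an involution. -/
def reflectAfterZero {t : ℕ} (w : Fin (t + 1) → ℤ) : Fin (t + 1) → ℤ :=
  fun j => if ∃ k ≤ j, w k = 0 then -w j else w j

section reflectAfterZero

variable {i : ℤ} {t : ℕ} {w : Fin (t + 1) → ℤ}

theorem reflectAfterZero_eq_zero_iff (j : Fin (t + 1)) :
    reflectAfterZero w j = 0 ↔ w j = 0 := by
  unfold reflectAfterZero; split_ifs <;> simp

theorem reflectAfterZero_involutive : Function.Involutive (reflectAfterZero (t := t)) := by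
  intro w
  funext j
  change (if ∃ k ≤ j, reflectAfterZero w k = 0 then _ else _) = w j
  simp only [reflectAfterZero_eq_zero_iff]
  by_cases h : ∃ k ≤ j, w k = 0 <;> simp [reflectAfterZero, h]

theorem IsWalk.reflectAfterZero (hw : IsWalk i t w) : IsWalk i t (reflectAfterZero w) := by
  refine ⟨?_, fun j => ?_⟩
  · unfold _root_.reflectAfterZero
    split_ifs with h
    · obtain ⟨k, hk, hk0⟩ := h
      rw [Fin.le_zero_iff.mp hk] at hk0
      linarith [hw.1]
    · exact hw.1
  unfold _root_.reflectAfterZero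
  split_ifs with hS hC hC
  · rw [show -w j.succ - -w j.castSucc = -(w j.succ - w j.castSucc) by ring, abs_neg]
    exact hw.2 j
  · -- the first visit to `0` is at `j.succ`, where negation changes nothing
    obtain ⟨k, hk, hk0⟩ := hS
    have hkj : k = j.succ := le_antisymm hk (by
      by_contra hlt
      exact hC ⟨k, Fin.le_castSucc_iff.mpr (not_le.mp hlt), hk0⟩)
    rw [← hkj, hk0, neg_zero, ← hk0, hkj]
    exact hw.2 j
  · obtain ⟨k, hk, hk0⟩ := hC
    exact absurd ⟨k, hk.trans (Fin.castSucc_le_succ j), hk0⟩ hS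
  · exact hw.2 j

theorem reflectAfterZero_last (h : ∃ j, w j = 0) :
    reflectAfterZero w (Fin.last t) = -w (Fin.last t) := by
  obtain ⟨j, hj⟩ := h
  exact if_pos ⟨j, Fin.le_last j, hj⟩

end reflectAfterZero

/-- The walk from `i` whose up-steps are the steps in `s`. -/
def upStepWalk {t : ℕ} (i : ℤ) (s : Finset (Fin t)) : Fin (t + 1) → ℤ :=
  fun j => i + 2 * #{k ∈ s | k.castSucc < j} - j

section upStepWalk

variable {i : ℤ} {t : ℕ}

theorem upStepWalk_zero (s : Finset (Fin t)) : upStepWalk i s 0 = i := by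
  simp [upStepWalk]

theorem upStepWalk_succ (s : Finset (Fin t)) (j : Fin t) :
    upStepWalk i s j.succ = upStepWalk i s j.castSucc + if j ∈ s then 1 else -1 := by
  have hcard : #{k ∈ s | k ≤ j} = #{k ∈ s | k < j} + if j ∈ s then 1 else 0 := by
    rw [show {k ∈ s | k ≤ j} = {k ∈ s | k < j} ∪ {k ∈ s | k = j} by
        ext; simp [le_iff_lt_or_eq, and_or_left],
      card_union_of_disjoint (disjoint_filter.mpr fun _ _ h1 h2 => h1.ne h2), filter_eq']
    split_ifs <;> simp
  simp only [upStepWalk, Fin.castSucc_lt_succ_iff, Fin.castSucc_lt_castSucc_iff, hcard,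
    Fin.val_succ, Fin.val_castSucc]
  split_ifs <;> push_cast <;> ring

theorem upStepWalk_last (s : Finset (Fin t)) :
    upStepWalk i s (Fin.last t) = i + 2 * #s - t := by
  simp [upStepWalk, Fin.castSucc_lt_last]

theorem isWalk_upStepWalk (s : Finset (Fin t)) : IsWalk i t (upStepWalk i s) :=
  ⟨upStepWalk_zero s, fun j => by rw [upStepWalk_succ]; split_ifs <;> simp⟩

theorem upStepWalk_injective : Function.Injective (upStepWalk (t := t) i) := by
  intro s s' h
  ext j
  have := upStepWalk_succ (i := i) s j
  rw [h, upStepWalk_succ] at this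
  split_ifs at this <;> simp_all

theorem IsWalk.exists_upStepWalk_eq {w : Fin (t + 1) → ℤ} (hw : IsWalk i t w) :
    ∃ s, upStepWalk i s = w := by
  classical
  refine ⟨({k | w k.succ = w k.castSucc + 1} : Finset (Fin t)), funext fun j => ?_⟩
  induction j using Fin.induction with
  | zero => rw [upStepWalk_zero, hw.1]
  | succ j ih =>
    rw [upStepWalk_succ, ih]
    rcases hw.succ_eq j with h | h
    · simp [h]
    · simp [h]; omega

theorem finite_setOf_isWalk : {w | IsWalk i t w}.Finite :=
  (Set.finite_range (upStepWalk i)).subset fun _ hw => hw.exists_upStepWalk_eq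

theorem walkCount_eq_card (P : (Fin (t + 1) → ℤ) → Prop) [DecidablePred P] :
    walkCount i t P = #{s : Finset (Fin t) | P (upStepWalk i s)} := by
  have himage : {w | IsWalk i t w ∧ P w}
      = upStepWalk i '' ↑({s : Finset (Fin t) | P (upStepWalk i s)} : Finset _) := by
    ext w
    simp only [coe_filter, mem_univ, true_and, Set.mem_image]
    constructor
    · rintro ⟨hw, hP⟩
      obtain ⟨s, rfl⟩ := hw.exists_upStepWalk_eq
      exact ⟨s, hP, rfl⟩
    · rintro ⟨s, hP, rfl⟩
      exact ⟨isWalk_upStepWalk s, hP⟩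
  rw [walkCount, himage, Set.ncard_image_of_injective _ upStepWalk_injective,
    Set.ncard_coe_finset]

end upStepWalk

section walkCount

variable {i : ℤ} {t : ℕ} {P Q R : (Fin (t + 1) → ℤ) → Prop}

theorem finite_setOf_isWalk_and (P : (Fin (t + 1) → ℤ) → Prop) :
    {w | IsWalk i t w ∧ P w}.Finite :=
  finite_setOf_isWalk.subset fun _ hw => hw.1

theorem walkCount_le_add (h : ∀ w, IsWalk i t w → R w → P w ∨ Q w) :
    walkCount i t R ≤ walkCount i t P + walkCount i t Q :=
  (Set.ncard_le_ncard (s := {w | IsWalk i t w ∧ R w})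
    (fun w ⟨hw, hR⟩ => (h w hw hR).imp (⟨hw, ·⟩) (⟨hw, ·⟩))
    ((finite_setOf_isWalk_and P).union (finite_setOf_isWalk_and Q))).trans
    (Set.ncard_union_le _ _)

theorem walkCount_eq_add (h : ∀ w, IsWalk i t w → (R w ↔ P w ∨ Q w))
    (hPQ : ∀ w, P w → ¬Q w) : walkCount i t R = walkCount i t P + walkCount i t Q := by
  rw [walkCount, walkCount, walkCount, ← Set.ncard_union_eq
    (Set.disjoint_left.mpr fun w hP hQ => hPQ w hP.2 hQ.2)
    (finite_setOf_isWalk_and P) (finite_setOf_isWalk_and Q)]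
  congr 1
  ext w
  simp only [Set.mem_ofPred_eq, Set.mem_union]
  constructor
  · rintro ⟨hw, hR⟩; exact ((h w hw).mp hR).imp (⟨hw, ·⟩) (⟨hw, ·⟩)
  · rintro (⟨hw, hP⟩ | ⟨hw, hQ⟩)
    · exact ⟨hw, (h w hw).mpr (Or.inl hP)⟩
    · exact ⟨hw, (h w hw).mpr (Or.inr hQ)⟩

theorem walkCount_le_of_injective (f : (Fin (t + 1) → ℤ) → Fin (t + 1) → ℤ)
    (hf : Function.Injective f) (h : ∀ w, IsWalk i t w → P w → IsWalk i t (f w) ∧ Q (f w)) :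
    walkCount i t P ≤ walkCount i t Q :=
  Set.ncard_le_ncard_of_injOn f (fun w ⟨hw, hP⟩ => h w hw hP) hf.injOn
    (finite_setOf_isWalk_and Q)

theorem walkCount_last_mem_Ioc_le_walkCount_minGE_one (hi : 0 ≤ i) :
    walkCount i t (fun w => 0 < w (Fin.last t) ∧ w (Fin.last t) ≤ 2 * i)
      ≤ walkCount i t (minGE 1) := by
  have hsplit : walkCount i t (fun w => 0 < w (Fin.last t))
      = walkCount i t (fun w => 0 < w (Fin.last t) ∧ w (Fin.last t) ≤ 2 * i)
        + walkCount i t (fun w => 2 * i < w (Fin.last t)) :=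
    walkCount_eq_add (fun w _ => by omega) (fun w _ _ => by omega)
  have hcover : walkCount i t (fun w => 0 < w (Fin.last t))
      ≤ walkCount i t (minGE 1)
        + walkCount i t (fun w => (∃ j, w j = 0) ∧ 0 < w (Fin.last t)) := by
    refine walkCount_le_add fun w hw hpos => ?_
    by_cases hz : ∃ j, w j = 0
    · exact Or.inr ⟨hz, hpos⟩
    · exact Or.inl fun j => hw.pos_of_forall_ne_zero hi (not_exists.mp hz) j
  have hreflect : walkCount i t (fun w => (∃ j, w j = 0) ∧ 0 < w (Fin.last t))
      ≤ walkCount i t (fun w => w (Fin.last t) < 0) :=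
    walkCount_le_of_injective reflectAfterZero reflectAfterZero_involutive.injective
      fun w hw ⟨hz, hpos⟩ => ⟨hw.reflectAfterZero, by rw [reflectAfterZero_last hz]; omega⟩
  have hmirror : walkCount i t (fun w => w (Fin.last t) < 0)
      ≤ walkCount i t (fun w => 2 * i < w (Fin.last t)) := by
    refine walkCount_le_of_injective (fun w j => 2 * i - w j)
      (fun w w' h => funext fun j => by simpa using congrFun h j)
      fun w hw hneg => ⟨?_, by dsimp only; omega⟩
    simpa [two_mul] using hw.const_sub (2 * i)
  omega

end walkCount

theorem card_filter_card_eq_sum_choose (t : ℕ) (p : ℕ → Prop) [DecidablePred p] :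
    #{s : Finset (Fin t) | p #s} = ∑ u ∈ range (t + 1) with p u, t.choose u := by
  rw [card_filter, ← powerset_univ, sum_powerset_apply_card (fun m => if p m then 1 else 0),
    card_fin, sum_filter]
  simp

/-- The numbers `u` of up-steps for which a walk of length `t` from `i` ends in `(0, 2i]`. -/
def endWindow (t i : ℕ) : Finset ℕ := {u ∈ range (t + 1) | t < 2 * u + i ∧ 2 * u ≤ t + i}

theorem walkCount_last_mem_Ioc_eq_sum_choose (i t : ℕ) :
    walkCount i t (fun w => 0 < w (Fin.last t) ∧ w (Fin.last t) ≤ 2 * i)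
      = ∑ u ∈ endWindow t i, t.choose u := by
  rw [walkCount_eq_card, endWindow, ← card_filter_card_eq_sum_choose]
  congr 1
  ext s
  simp only [mem_filter, mem_univ, true_and, upStepWalk_last]
  omega

section window

variable {n i t : ℕ} {c : ℝ}

theorem exp_neg_mul_two_pow_le_mul_choose {u : ℕ} (ht : 0 < t) (hu : u ≤ t)
    (hd : ((2 * u : ℝ) - t) ^ 2 ≤ c * t) (htn : 4 * (t : ℝ) ≤ n ^ 2) :
    exp (-c) * 2 ^ t ≤ n * t.choose u := by
  obtain ⟨v, rfl⟩ := Nat.exists_eq_add_of_le hu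
  have htR : (0 : ℝ) < u + v := by exact_mod_cast ht
  have hexp : exp (-c) ≤ exp (-(((u : ℝ) - v) ^ 2 / (u + v))) := by
    rw [Real.exp_le_exp, neg_le_neg_iff, div_le_iff₀ htR]
    push_cast at hd
    linarith
  have hsqrt : 2 * √((u : ℝ) + v) ≤ n := by
    have := Real.sqrt_le_iff.mpr (⟨by positivity, by push_cast at htn; linarith⟩ :
      (0 : ℝ) ≤ n / 2 ∧ (u : ℝ) + v ≤ (n / 2) ^ 2)
    linarith
  calc exp (-c) * 2 ^ (u + v) ≤ 2 ^ (u + v) * exp (-(((u : ℝ) - v) ^ 2 / (u + v))) := by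
        rw [mul_comm]; gcongr
    _ ≤ 2 * √((u : ℝ) + v) * (u + v).choose u := by
        rw [← neg_div]; exact two_pow_mul_exp_le_sqrt_mul_choose ht
    _ ≤ n * (u + v).choose u := by gcongr

theorem endWindow_eq_Ioc (hit : i ≤ t) : endWindow t i = Ioc ((t - i) / 2) ((t + i) / 2) := by
  ext u
  simp only [endWindow, mem_filter, mem_range, mem_Ioc]
  omega

theorem endWindow_eq_range (hti : t < i) : endWindow t i = range (t + 1) :=
  filter_true_of_mem fun u hu => by rw [mem_range] at hu; omega

theorem exp_neg_mul_two_pow_le_mul_sum_choose (hc : 0 ≤ c) (ht : 0 < t) (hin : 2 * i ≤ n + 1)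
    (hct : (n : ℝ) ^ 2 ≤ c * t) (htn : 4 * (t : ℝ) ≤ n ^ 2) :
    exp (-c) * i * 2 ^ t ≤ n * ∑ u ∈ endWindow t i, (t.choose u : ℝ) := by
  have hi : (i : ℝ) ≤ n := by exact_mod_cast (by omega : i ≤ n)
  rcases le_or_gt i t with hit | hti
  · rw [endWindow_eq_Ioc hit, mul_sum]
    have hcard : #(Ioc ((t - i) / 2) ((t + i) / 2)) = i := by rw [Nat.card_Ioc]; omega
    calc exp (-c) * i * 2 ^ t = #(Ioc ((t - i) / 2) ((t + i) / 2)) • (exp (-c) * 2 ^ t) := by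
          rw [hcard, nsmul_eq_mul]; ring
      _ ≤ _ := by
        refine card_nsmul_le_sum _ _ _ fun u hu => ?_
        rw [mem_Ioc] at hu
        refine exp_neg_mul_two_pow_le_mul_choose ht (by omega) ?_ htn
        have hlo : (t : ℝ) ≤ 2 * u + i := by exact_mod_cast (by omega : t ≤ 2 * u + i)
        have hhi : (2 * u : ℝ) ≤ t + i := by exact_mod_cast (by omega : 2 * u ≤ t + i)
        nlinarith [sq_le_sq' (by linarith : -(i : ℝ) ≤ 2 * u - t)
          (by linarith : (2 * u : ℝ) - t ≤ i)]
  · rw [endWindow_eq_range hti, ← Nat.cast_sum, Nat.sum_range_choose, Nat.cast_pow, Nat.cast_two]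
    have : exp (-c) ≤ 1 := Real.exp_le_one_iff.mpr (by linarith)
    gcongr
    nlinarith [Real.exp_pos (-c)]

end window

theorem walkProb_min_lower_general (n i t : ℕ) (c : ℝ) (hn : 0 < n)
    (hi2 : i ≤ (n + 1) / 2) (hc : 4 < c) (ht0 : 0 < t)
    (ht1 : (n : ℝ) ^ 2 / c ≤ (t : ℝ)) (ht2 : (t : ℝ) ≤ (n : ℝ) ^ 2 / 4) :
    walkProb (i : ℤ) t (fun w => minGE 1 w) ≥ Real.exp (-1 - c) * (i : ℝ) / (n : ℝ) := by
  have hct : (n : ℝ) ^ 2 ≤ c * t := by rwa [div_le_iff₀ (by linarith), mul_comm] at ht1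
  have hwindow :
      ∑ u ∈ endWindow t i, (t.choose u : ℝ) ≤ walkCount i t (fun w => minGE 1 w) := by
    rw [← Nat.cast_sum, ← walkCount_last_mem_Ioc_eq_sum_choose]
    exact_mod_cast walkCount_last_mem_Ioc_le_walkCount_minGE_one (Int.natCast_nonneg i)
  rw [walkProb, ge_iff_le, div_le_div_iff₀ (by positivity) (by positivity)]
  calc exp (-1 - c) * i * 2 ^ t ≤ exp (-c) * i * 2 ^ t := by gcongr; linarith
    _ ≤ n * ∑ u ∈ endWindow t i, (t.choose u : ℝ) :=
      exp_neg_mul_two_pow_le_mul_sum_choose (by linarith) ht0 (by omega) hct (by linarith)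
    _ ≤ walkCount i t (fun w => minGE 1 w) * n := by rw [mul_comm]; gcongr

/-- For a positive integer `n`, an integer `1 ≤ i ≤ ⌈n/2⌉`, a real
`c > 4`, and a positive integer `t` with `n²/c ≤ t ≤ n²/4`,
`Pr_i^t[MIN(w) ≥ 1] ≥ e^{-1-c} · i / n`. -/
theorem walkProb_min_lower (n i t : ℕ) (c : ℝ) (hn : 0 < n)
    (hi1 : 1 ≤ i) (hi2 : i ≤ (n + 1) / 2) (hc : 4 < c) (ht0 : 0 < t)
    (ht1 : (n : ℝ) ^ 2 / c ≤ (t : ℝ)) (ht2 : (t : ℝ) ≤ (n : ℝ) ^ 2 / 4) :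
    walkProb (i : ℤ) t (fun w => minGE 1 w) ≥ Real.exp (-1 - c) * (i : ℝ) / (n : ℝ) :=
  walkProb_min_lower_general n i t c hn hi2 hc ht0 ht1 ht2
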